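/- arXiv:1512.01884 — 2 statements merged into one kernel-verified Lean document; each statement's English description precedes it below -/
import Mathlib

section
/- Dirichlet energy of the one-dimensional exponential harmonic profile is exponentially small: let ū(x) = (e^{2L} − e^{−2λ x₁})/(e^{2L} − e^{−2L}) on the strip −L/λ ≤ x₁ ≤ L/λ in ℤ^d, and conductances bounded by ω^λ(x,y) ≤ κ e^{2λ x₁} on horizontal edges. Then the Dirichlet energy of ū on the box [−L/λ, L/λ] × [−R, R]^{d−1} is at most C R^{d−1} λ (e^{2L} − e^{−2L})^{−1} ≤ C R^{d−1} λ e^{−L}. -/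
private lemma geomAux {r : ℝ} (h0 : 0 ≤ r) (h1 : r < 1) (n : ℕ) :
    ∑ i ∈ Finset.range n, r ^ i ≤ (1 - r)⁻¹ := by
  rw [geom_sum_eq (ne_of_lt h1), div_le_iff_of_neg (by linarith : r - 1 < 0)]
  have h2 : (1 - r)⁻¹ * (r - 1) = -1 := by
    rw [inv_mul_eq_div, div_eq_iff (by linarith : (1:ℝ) - r ≠ 0)]
    ring
  rw [h2]
  nlinarith [pow_nonneg h0 n]

private lemma sumIccExp (c : ℝ) (N : ℕ) :
    ∑ k ∈ Finset.Icc (-(N:ℤ)) (N:ℤ), Real.exp (-(c * (k:ℝ)))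
      = ∑ j ∈ Finset.range (2*N+1), Real.exp (c * N) * Real.exp (-c) ^ j := by
  refine Finset.sum_nbij' (fun k => (k + N).toNat) (fun j => (j : ℤ) - N) ?_ ?_ ?_ ?_ ?_
  · intro k hk
    rw [Finset.mem_Icc] at hk
    simp only [Finset.mem_range]
    omega
  · intro j hj
    simp only [Finset.mem_range] at hj
    simp only [Finset.mem_Icc]
    omega
  · intro k hk
    rw [Finset.mem_Icc] at hk
    omega
  · intro j hj
    simp only [Finset.mem_range] at hj
    omega
  · intro k hk
    rw [Finset.mem_Icc] at hk
    rw [← Real.exp_nat_mul, ← Real.exp_add]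
    congr 1
    have h : ((k + (N:ℤ)).toNat : ℝ) = (k:ℝ) + N := by
      have h2 : ((k + (N:ℤ)).toNat : ℤ) = k + N := by omega
      exact_mod_cast congrArg (Int.cast : ℤ → ℝ) h2
    rw [h]
    ring

private lemma S1bound {lam L : ℝ} (N : ℕ) (hl0 : 0 < lam) (hl1 : lam < 1)
    (hNlam : (N : ℝ) * lam = L) :
    ∑ k ∈ Finset.Icc (-(N:ℤ)) (N:ℤ), Real.exp (-(2 * lam * (k:ℝ)))
      ≤ Real.exp (2 * L) * Real.exp 2 / (2 * lam) := by
  rw [sumIccExp (2 * lam) N, ← Finset.mul_sum]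
  have hr0 : (0:ℝ) ≤ Real.exp (-(2 * lam)) := (Real.exp_pos _).le
  have hr1 : Real.exp (-(2 * lam)) < 1 := Real.exp_lt_one_iff.mpr (by linarith)
  have hgeo := geomAux hr0 hr1 (2 * N + 1)
  have hEN : Real.exp (2 * lam * N) = Real.exp (2 * L) := by
    congr 1
    rw [← hNlam]; ring
  have hinv : (1 - Real.exp (-(2 * lam)))⁻¹ ≤ Real.exp 2 / (2 * lam) := by
    have hqinv : Real.exp (-(2 * lam)) * Real.exp (2 * lam) = 1 := by
      rw [← Real.exp_add]; norm_num
    have hlow : 2 * lam * Real.exp (-(2 * lam)) ≤ 1 - Real.exp (-(2 * lam)) := by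
      nlinarith [Real.add_one_le_exp (2 * lam), Real.exp_pos (-(2 * lam))]
    have hpos : 0 < 2 * lam * Real.exp (-(2 * lam)) := by positivity
    calc (1 - Real.exp (-(2 * lam)))⁻¹ ≤ (2 * lam * Real.exp (-(2 * lam)))⁻¹ :=
          inv_anti₀ hpos hlow
      _ = Real.exp (2 * lam) / (2 * lam) := by
          rw [mul_inv, Real.exp_neg, inv_inv]
          ring
      _ ≤ Real.exp 2 / (2 * lam) := by
          gcongr
          linarith
  calc Real.exp (2 * lam * N) * ∑ j ∈ Finset.range (2*N+1), Real.exp (-(2*lam)) ^ j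
      ≤ Real.exp (2 * lam * N) * (1 - Real.exp (-(2 * lam)))⁻¹ := by
        apply mul_le_mul_of_nonneg_left hgeo (Real.exp_pos _).le
    _ ≤ Real.exp (2 * L) * (Real.exp 2 / (2 * lam)) := by
        rw [hEN]
        apply mul_le_mul_of_nonneg_left hinv (Real.exp_pos _).le
    _ = Real.exp (2 * L) * Real.exp 2 / (2 * lam) := by ring

private lemma sumBox {d : ℕ} (i0 : Fin d) (t : Fin d → Finset ℤ) (F : ℤ → ℝ) :
    ∑ x ∈ Fintype.piFinset t, F (x i0)
      = (∑ k ∈ t i0, F k) * ∏ i ∈ Finset.univ \ {i0}, ((t i).card : ℝ) := by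
  have key := Finset.prod_univ_sum t (fun i (j : ℤ) => if i = i0 then F j else (1:ℝ))
  have h1 : ∀ x ∈ Fintype.piFinset t,
      (∏ i, if i = i0 then F (x i) else (1:ℝ)) = F (x i0) := by
    intro x _
    rw [Finset.prod_ite_eq' Finset.univ i0 (fun i => F (x i))]
    simp
  rw [← Finset.sum_congr rfl h1, ← key,
    Finset.prod_eq_mul_prod_sdiff_singleton_of_mem (Finset.mem_univ i0)]
  congr 1
  · simp
  · refine Finset.prod_congr rfl fun i hi => ?_
    rw [Finset.mem_sdiff, Finset.mem_singleton] at hi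
    simp [hi.2]

private lemma sumIte {d : ℕ} (i0 : Fin d) (c : ℝ) :
    ∑ p : Fin d × Bool, (if p.1 = i0 then c else 0) = 2 * c := by
  have h1 : ∀ a : Fin d, (∑ b : Bool, if ((a, b) : Fin d × Bool).1 = i0 then c else 0)
      = (if a = i0 then 2 * c else 0) := fun a => by
    rcases eq_or_ne a i0 with h | h <;> simp [h, two_mul]
  rw [Fintype.sum_prod_type, Finset.sum_congr rfl fun a _ => h1 a,
    Finset.sum_ite_eq' Finset.univ i0 (fun _ => 2 * c)]
  simp

private lemma edgeCore {κ lam u v w : ℝ} (hκ : 0 < κ) (hl : 0 < lam) (hw0 : 0 ≤ w)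
    (hw : w ≤ κ * Real.exp (lam * (u + v))) (hv : v = u + 1 ∨ v = u - 1) :
    w * (Real.exp (-2*lam*v) - Real.exp (-2*lam*u))^2
      ≤ κ * Real.exp (2*lam) * (Real.exp (2*lam)-1)^2 * Real.exp (-(2*(lam*u))) := by
  set q := Real.exp (2*lam) with hqdef
  have hq1 : 1 < q := Real.one_lt_exp_iff.mpr (by linarith)
  have hAP : Real.exp (-(2*(lam*u))) * Real.exp (2*(lam*u)) = 1 := by
    rw [← Real.exp_add]; simp
  have hA0 : 0 < Real.exp (-(2*(lam*u))) := Real.exp_pos _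
  have hqinv : Real.exp (-(2*lam)) * q = 1 := by
    rw [hqdef, ← Real.exp_add]; norm_num
  have hwb : w ≤ κ * (Real.exp (2*(lam*u)) * q) := by
    refine hw.trans (mul_le_mul_of_nonneg_left ?_ hκ.le)
    rw [hqdef, ← Real.exp_add]
    refine Real.exp_le_exp.mpr ?_
    rcases hv with hv | hv <;> subst hv <;> nlinarith
  rcases hv with hv | hv
  · subst hv
    have hdiff : Real.exp (-2*lam*(u+1)) - Real.exp (-2*lam*u)
        = Real.exp (-(2*(lam*u))) * (Real.exp (-(2*lam)) - 1) := by
      rw [mul_sub, ← Real.exp_add, mul_one]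
      ring_nf
    have hineq : (Real.exp (-(2*lam)) - 1)^2 ≤ (q - 1)^2 := by
      nlinarith [hqinv, Real.exp_pos (-(2*lam))]
    calc w * (Real.exp (-2*lam*(u+1)) - Real.exp (-2*lam*u))^2
        = w * (Real.exp (-(2*(lam*u)))^2 * (Real.exp (-(2*lam)) - 1)^2) := by
          rw [hdiff]; ring
      _ ≤ (κ * (Real.exp (2*(lam*u)) * q)) * (Real.exp (-(2*(lam*u)))^2 * (q - 1)^2) := by
          apply mul_le_mul hwb (by nlinarith [sq_nonneg (Real.exp (-(2*(lam*u))))]) (by positivity) (by positivity)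
      _ = κ * q * (q-1)^2 * (Real.exp (-(2*(lam*u))) * (Real.exp (-(2*(lam*u))) * Real.exp (2*(lam*u)))) := by ring
      _ = κ * q * (q-1)^2 * Real.exp (-(2*(lam*u))) := by rw [hAP]; ring
  · subst hv
    have hdiff : Real.exp (-2*lam*(u-1)) - Real.exp (-2*lam*u)
        = Real.exp (-(2*(lam*u))) * (q - 1) := by
      have h1 : Real.exp (-2*lam*(u-1)) = Real.exp (-(2*(lam*u))) * q := by
        rw [hqdef, ← Real.exp_add]; ring_nf
      have h2 : Real.exp (-2*lam*u) = Real.exp (-(2*(lam*u))) := by ring_nf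
      rw [h1, h2]; ring
    calc w * (Real.exp (-2*lam*(u-1)) - Real.exp (-2*lam*u))^2
        = w * (Real.exp (-(2*(lam*u)))^2 * (q - 1)^2) := by
          rw [hdiff]; ring
      _ ≤ (κ * (Real.exp (2*(lam*u)) * q)) * (Real.exp (-(2*(lam*u)))^2 * (q - 1)^2) := by
          apply mul_le_mul hwb le_rfl (by positivity) (by positivity)
      _ = κ * q * (q-1)^2 * (Real.exp (-(2*(lam*u))) * (Real.exp (-(2*(lam*u))) * Real.exp (2*(lam*u)))) := by ring
      _ = κ * q * (q-1)^2 * Real.exp (-(2*(lam*u))) := by rw [hAP]; ring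

private lemma finalChain {κ lam L D : ℝ} (d R : ℕ) (hκ : 1 < κ)
    (hl0 : 0 < lam) (hl1 : lam < 1) (hR : 1 ≤ R) (hD : 0 < D)
    (hDe : Real.exp (2 * L) ≤ 2 * D) {S1 : ℝ} (hS0 : 0 ≤ S1)
    (hS : S1 ≤ Real.exp (2 * L) * Real.exp 2 / (2 * lam)) :
    2 * (κ * Real.exp (2 * lam) * (Real.exp (2 * lam) - 1) ^ 2 / D ^ 2)
        * (S1 * (2 * (R : ℝ) + 1) ^ (d - 1))
      ≤ κ * 3 ^ d * Real.exp 14 * (R : ℝ) ^ (d - 1) * lam * D⁻¹ := by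
  set E := Real.exp 2 with hE
  set q := Real.exp (2 * lam) with hq
  have hE3 : (3:ℝ) ≤ E := by nlinarith [Real.add_one_le_exp (2:ℝ)]
  have hq1 : 1 < q := Real.one_lt_exp_iff.mpr (by linarith)
  have hq1' : (0:ℝ) ≤ q - 1 := by linarith
  have hqE : q ≤ E := Real.exp_le_exp.mpr (by linarith)
  have hqinv : Real.exp (-(2 * lam)) * q = 1 := by
    rw [hq, ← Real.exp_add]; norm_num
  have hqlam : q - 1 ≤ 2 * lam * E := by
    have h1 : q - 1 ≤ 2 * lam * q := by
      nlinarith [Real.add_one_le_exp (-(2 * lam)), Real.exp_pos (-(2 * lam))]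
    nlinarith
  have hP : (2 * (R : ℝ) + 1) ^ (d - 1) ≤ 3 ^ d * (R : ℝ) ^ (d - 1) := by
    have hR1 : (1:ℝ) ≤ (R:ℝ) := by exact_mod_cast hR
    calc (2 * (R : ℝ) + 1) ^ (d - 1) ≤ (3 * (R:ℝ)) ^ (d - 1) :=
          pow_le_pow_left₀ (by positivity) (by linarith) _
      _ = 3 ^ (d-1) * (R:ℝ) ^ (d - 1) := mul_pow _ _ _
      _ ≤ 3 ^ d * (R : ℝ) ^ (d - 1) := by
          apply mul_le_mul_of_nonneg_right _ (by positivity)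
          exact pow_le_pow_right₀ (by norm_num) (Nat.sub_le d 1)
  have hE14 : Real.exp 14 = E ^ 7 := by
    rw [hE, ← Real.exp_nat_mul]; norm_num
  have hP0 : (0:ℝ) ≤ (2 * (R : ℝ) + 1) ^ (d - 1) := by positivity
  have h2 : (q - 1) * S1 ≤ E ^ 2 * Real.exp (2 * L) := by
    have h := mul_le_mul hqlam hS hS0 (by positivity : (0:ℝ) ≤ 2 * lam * E)
    calc (q - 1) * S1 ≤ (2 * lam * E) * (Real.exp (2 * L) * E / (2 * lam)) := h
      _ = E ^ 2 * Real.exp (2 * L) := by field_simp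
  have h2' : (0:ℝ) ≤ (q - 1) * S1 := mul_nonneg hq1' hS0
  have hgoal : 2 * κ * q * (q - 1) ^ 2 * S1 * (2 * (R : ℝ) + 1) ^ (d - 1)
      ≤ κ * 3 ^ d * E ^ 7 * (R : ℝ) ^ (d - 1) * lam * D := by
    have h8 : 8 * E ^ 4 ≤ E ^ 7 := by
      have hEpos : (0:ℝ) < E := by linarith
      have h27 : (27:ℝ) ≤ E ^ 3 := by nlinarith
      nlinarith [pow_pos hEpos 4]
    calc 2 * κ * q * (q - 1) ^ 2 * S1 * (2 * (R : ℝ) + 1) ^ (d - 1)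
        = 2 * κ * q * (q - 1) * ((q - 1) * S1) * (2 * (R : ℝ) + 1) ^ (d - 1) := by ring
      _ ≤ 2 * κ * E * (2 * lam * E) * (E ^ 2 * Real.exp (2 * L)) * (3 ^ d * (R : ℝ) ^ (d - 1)) := by
          gcongr <;> positivity
      _ = 4 * κ * lam * E ^ 4 * Real.exp (2 * L) * (3 ^ d * (R : ℝ) ^ (d - 1)) := by ring
      _ ≤ 4 * κ * lam * E ^ 4 * (2 * D) * (3 ^ d * (R : ℝ) ^ (d - 1)) := by
          gcongr <;> positivity
      _ = (8 * E ^ 4) * (κ * lam * D * (3 ^ d * (R : ℝ) ^ (d - 1))) := by ring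
      _ ≤ (E ^ 7) * (κ * lam * D * (3 ^ d * (R : ℝ) ^ (d - 1))) := by
          apply mul_le_mul_of_nonneg_right h8 (by positivity)
      _ = κ * 3 ^ d * E ^ 7 * (R : ℝ) ^ (d - 1) * lam * D := by ring
  have hD2 : (0:ℝ) < D ^ 2 := by positivity
  calc 2 * (κ * q * (q - 1) ^ 2 / D ^ 2) * (S1 * (2 * (R : ℝ) + 1) ^ (d - 1))
      = (2 * κ * q * (q - 1) ^ 2 * S1 * (2 * (R : ℝ) + 1) ^ (d - 1)) / D ^ 2 := by ring
    _ ≤ (κ * 3 ^ d * E ^ 7 * (R : ℝ) ^ (d - 1) * lam * D) / D ^ 2 :=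
        (div_le_div_iff_of_pos_right hD2).mpr hgoal
    _ = κ * 3 ^ d * E ^ 7 * (R : ℝ) ^ (d - 1) * lam * D⁻¹ := by
        field_simp
    _ = κ * 3 ^ d * Real.exp 14 * (R : ℝ) ^ (d - 1) * lam * D⁻¹ := by rw [hE14]

/-- The Dirichlet energy of the one-dimensional exponential harmonic profile
`ū(x) = (e^{2L} − e^{−2λx₁})/(e^{2L} − e^{−2L})` on the box
`[−L/λ, L/λ] × [−R, R]^{d−1}` with conductances bounded by `κ e^{λ(x₁+y₁)}` is at most
`C R^{d−1} λ (e^{2L} − e^{−2L})⁻¹ ≤ C R^{d−1} λ e^{−L}`. -/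
theorem stmt15 (d : ℕ) (hd : 2 ≤ d) (κ : ℝ) (hκ : 1 < κ) :
    ∃ Cst : ℝ, 0 < Cst ∧
      ∀ (L lam : ℝ) (N R : ℕ) (w : (Fin d → ℤ) → (Fin d → ℤ) → ℝ),
        0 < lam → lam < 1 → 1 ≤ L → (N : ℝ) * lam = L → 1 ≤ R →
        (∀ x y : Fin d → ℤ,
          0 ≤ w x y ∧
            w x y ≤ κ * Real.exp (lam * ((x ⟨0, by omega⟩ : ℝ) + (y ⟨0, by omega⟩ : ℝ)))) →
        (let i0 : Fin d := ⟨0, by omega⟩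
        let box : Finset (Fin d → ℤ) :=
          Finset.Icc (fun i => if i = i0 then -(N : ℤ) else -(R : ℤ))
            (fun i => if i = i0 then (N : ℤ) else (R : ℤ))
        let ubar : (Fin d → ℤ) → ℝ := fun x =>
          (Real.exp (2 * L) - Real.exp (-2 * lam * (x i0 : ℝ)))
            / (Real.exp (2 * L) - Real.exp (-2 * L))
        let unit : Fin d × Bool → (Fin d → ℤ) :=
          fun p => Pi.single p.1 (if p.2 then (1 : ℤ) else -1)
        (∑ x ∈ box, ∑ p : Fin d × Bool,
            (if x + unit p ∈ box then w x (x + unit p) * (ubar x - ubar (x + unit p)) ^ 2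
              else 0))
          ≤ Cst * (R : ℝ) ^ (d - 1) * lam * (Real.exp (2 * L) - Real.exp (-2 * L))⁻¹
        ∧ Cst * (R : ℝ) ^ (d - 1) * lam * (Real.exp (2 * L) - Real.exp (-2 * L))⁻¹
          ≤ Cst * (R : ℝ) ^ (d - 1) * lam * Real.exp (-L)) := by
  refine ⟨κ * 3 ^ d * Real.exp 14, by positivity, ?_⟩
  intro L lam N R w hl0 hl1 hL hNlam hR hw
  intro i0 box ubar unit
  have hκ0 : (0:ℝ) < κ := by linarith
  have hD : 0 < Real.exp (2 * L) - Real.exp (-2 * L) := by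
    have h := Real.exp_lt_exp.mpr (show (-2 * L : ℝ) < 2 * L by linarith)
    linarith
  have h1 : Real.exp (2 * L) = Real.exp L * Real.exp L := by
    rw [← Real.exp_add]; ring_nf
  have h2 : Real.exp (-2 * L) * (Real.exp L * Real.exp L) = 1 := by
    rw [← Real.exp_add, ← Real.exp_add, show -2 * L + (L + L) = (0:ℝ) by ring,
      Real.exp_zero]
  have h3 : (2:ℝ) ≤ Real.exp L := by
    nlinarith [Real.add_one_le_exp L]
  have hz : Real.exp (-2 * L) ≤ 1/4 := by
    nlinarith [Real.exp_pos (-2 * L)]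
  have hDL : Real.exp L ≤ Real.exp (2 * L) - Real.exp (-2 * L) := by
    nlinarith [Real.exp_pos (-2 * L), Real.exp_pos L]
  constructor
  · -- main energy bound
    have hKc0 : 0 ≤ κ * Real.exp (2 * lam) * (Real.exp (2 * lam) - 1) ^ 2
        / (Real.exp (2 * L) - Real.exp (-2 * L)) ^ 2 :=
      div_nonneg (mul_nonneg (mul_nonneg hκ0.le (Real.exp_pos _).le) (sq_nonneg _))
        (sq_nonneg _)
    have step1 : ∀ x ∈ box, (∑ p : Fin d × Bool,
        if x + unit p ∈ box then w x (x + unit p) * (ubar x - ubar (x + unit p)) ^ 2 else 0)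
        ≤ 2 * (κ * Real.exp (2 * lam) * (Real.exp (2 * lam) - 1) ^ 2
            / (Real.exp (2 * L) - Real.exp (-2 * L)) ^ 2)
          * Real.exp (-(2 * lam * (x i0 : ℝ))) := by
      intro x _
      have hterm : ∀ p : Fin d × Bool,
          (if x + unit p ∈ box then w x (x + unit p) * (ubar x - ubar (x + unit p)) ^ 2 else 0)
          ≤ (if p.1 = i0 then (κ * Real.exp (2 * lam) * (Real.exp (2 * lam) - 1) ^ 2
              / (Real.exp (2 * L) - Real.exp (-2 * L)) ^ 2)
            * Real.exp (-(2 * lam * (x i0 : ℝ))) else 0) := by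
        intro p
        by_cases hp : p.1 = i0
        · rw [if_pos hp]
          by_cases hin : x + unit p ∈ box
          · rw [if_pos hin]
            have hyint : (x + unit p) i0 = x i0 + (if p.2 then (1:ℤ) else -1) := by
              rw [← hp]
              simp only [unit, Pi.add_apply, Pi.single_eq_same]
            have hv : (((x + unit p) i0 : ℤ) : ℝ) = ((x i0 : ℤ) : ℝ) + 1
                ∨ (((x + unit p) i0 : ℤ) : ℝ) = ((x i0 : ℤ) : ℝ) - 1 := by
              rcases Bool.eq_false_or_eq_true p.2 with h | h
              · left
                rw [hyint, h]
                norm_num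
              · right
                rw [hyint, h]
                push_cast
                ring
            have hub : ubar x - ubar (x + unit p)
                = (Real.exp (-2 * lam * (((x + unit p) i0 : ℤ) : ℝ))
                    - Real.exp (-2 * lam * ((x i0 : ℤ) : ℝ)))
                  / (Real.exp (2 * L) - Real.exp (-2 * L)) := by
              simp only [ubar]
              rw [div_sub_div_same]
              ring_nf
            have hcore := edgeCore hκ0 hl0 (hw x (x + unit p)).1 (hw x (x + unit p)).2 hv
            have hD2 : (0:ℝ) < (Real.exp (2 * L) - Real.exp (-2 * L)) ^ 2 := by positivity
            calc w x (x + unit p) * (ubar x - ubar (x + unit p)) ^ 2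
                = (w x (x + unit p) * (Real.exp (-2 * lam * (((x + unit p) i0 : ℤ) : ℝ))
                    - Real.exp (-2 * lam * ((x i0 : ℤ) : ℝ))) ^ 2)
                  / (Real.exp (2 * L) - Real.exp (-2 * L)) ^ 2 := by
                  rw [hub, div_pow]; ring
              _ ≤ (κ * Real.exp (2 * lam) * (Real.exp (2 * lam) - 1) ^ 2
                    * Real.exp (-(2 * (lam * ((x i0 : ℤ) : ℝ)))))
                  / (Real.exp (2 * L) - Real.exp (-2 * L)) ^ 2 :=
                  (div_le_div_iff_of_pos_right hD2).mpr hcore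
              _ = (κ * Real.exp (2 * lam) * (Real.exp (2 * lam) - 1) ^ 2
                    / (Real.exp (2 * L) - Real.exp (-2 * L)) ^ 2)
                  * Real.exp (-(2 * lam * ((x i0 : ℤ) : ℝ))) := by
                  rw [show 2 * (lam * ((x i0 : ℤ) : ℝ)) = 2 * lam * ((x i0 : ℤ) : ℝ) by ring]
                  ring
          · rw [if_neg hin]
            exact mul_nonneg hKc0 (Real.exp_pos _).le
        · rw [if_neg hp]
          have hsame : (x + unit p) i0 = x i0 := by
            simp only [unit, Pi.add_apply]
            rw [Pi.single_eq_of_ne (fun h => hp h.symm), add_zero]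
          have hubeq : ubar (x + unit p) = ubar x := by
            simp only [ubar, hsame]
          split_ifs with h
          · rw [hubeq]
            simp
          · exact le_refl 0
      calc (∑ p : Fin d × Bool,
          if x + unit p ∈ box then w x (x + unit p) * (ubar x - ubar (x + unit p)) ^ 2 else 0)
          ≤ ∑ p : Fin d × Bool, (if p.1 = i0 then (κ * Real.exp (2 * lam)
              * (Real.exp (2 * lam) - 1) ^ 2
              / (Real.exp (2 * L) - Real.exp (-2 * L)) ^ 2)
            * Real.exp (-(2 * lam * (x i0 : ℝ))) else 0) :=
            Finset.sum_le_sum fun p _ => hterm p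
        _ = 2 * (κ * Real.exp (2 * lam) * (Real.exp (2 * lam) - 1) ^ 2
              / (Real.exp (2 * L) - Real.exp (-2 * L)) ^ 2)
            * Real.exp (-(2 * lam * (x i0 : ℝ))) := by
            rw [sumIte i0]
            ring
    have hboxeq : box = Fintype.piFinset (fun i =>
        Finset.Icc (if i = i0 then -(N:ℤ) else -(R:ℤ)) (if i = i0 then (N:ℤ) else (R:ℤ))) := by
      simp only [box]
      exact Pi.Icc_eq _ _
    have hbs : ∑ x ∈ box, Real.exp (-(2 * lam * ((x i0 : ℤ) : ℝ)))
        = (∑ k ∈ Finset.Icc (-(N:ℤ)) (N:ℤ), Real.exp (-(2 * lam * (k:ℝ))))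
          * (2 * (R:ℝ) + 1) ^ (d-1) := by
      rw [hboxeq, sumBox i0 _ (fun k => Real.exp (-(2 * lam * (k:ℝ))))]
      have e1 : (if i0 = i0 then -(N:ℤ) else -(R:ℤ)) = -(N:ℤ) := if_pos rfl
      have e2 : (if i0 = i0 then (N:ℤ) else (R:ℤ)) = (N:ℤ) := if_pos rfl
      rw [e1, e2]
      congr 1
      have hcard : ∀ i ∈ Finset.univ \ {i0},
          (((Finset.Icc (if i = i0 then -(N:ℤ) else -(R:ℤ))
            (if i = i0 then (N:ℤ) else (R:ℤ))).card : ℕ) : ℝ) = 2 * (R:ℝ) + 1 := by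
        intro i hi
        rw [Finset.mem_sdiff, Finset.mem_singleton] at hi
        rw [if_neg hi.2, if_neg hi.2, Int.card_Icc,
          show ((R:ℤ) + 1 - -(R:ℤ)).toNat = 2 * R + 1 by omega]
        push_cast
        ring
      rw [Finset.prod_congr rfl hcard, Finset.prod_const,
        Finset.card_sdiff_of_subset (Finset.subset_univ _), Finset.card_univ,
        Finset.card_singleton, Fintype.card_fin]
    have hDe : Real.exp (2 * L) ≤ 2 * (Real.exp (2 * L) - Real.exp (-2 * L)) := by
      have hone : (1:ℝ) ≤ Real.exp (2 * L) := Real.one_le_exp (by linarith)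
      linarith
    have hS0 : 0 ≤ ∑ k ∈ Finset.Icc (-(N:ℤ)) (N:ℤ), Real.exp (-(2 * lam * (k:ℝ))) :=
      Finset.sum_nonneg fun k _ => (Real.exp_pos _).le
    calc (∑ x ∈ box, ∑ p : Fin d × Bool,
        (if x + unit p ∈ box then w x (x + unit p) * (ubar x - ubar (x + unit p)) ^ 2
          else 0))
        ≤ ∑ x ∈ box, 2 * (κ * Real.exp (2 * lam) * (Real.exp (2 * lam) - 1) ^ 2
            / (Real.exp (2 * L) - Real.exp (-2 * L)) ^ 2)
          * Real.exp (-(2 * lam * (x i0 : ℝ))) := Finset.sum_le_sum step1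
      _ = 2 * (κ * Real.exp (2 * lam) * (Real.exp (2 * lam) - 1) ^ 2
            / (Real.exp (2 * L) - Real.exp (-2 * L)) ^ 2)
          * ((∑ k ∈ Finset.Icc (-(N:ℤ)) (N:ℤ), Real.exp (-(2 * lam * (k:ℝ))))
            * (2 * (R:ℝ) + 1) ^ (d-1)) := by
          rw [← hbs, Finset.mul_sum]
      _ ≤ κ * 3 ^ d * Real.exp 14 * (R : ℝ) ^ (d - 1) * lam
            * (Real.exp (2 * L) - Real.exp (-2 * L))⁻¹ :=
          finalChain d R hκ hl0 hl1 hR hD hDe hS0 (S1bound N hl0 hl1 hNlam)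
  · have hinv : (Real.exp (2 * L) - Real.exp (-2 * L))⁻¹ ≤ Real.exp (-L) := by
      rw [Real.exp_neg]
      exact inv_anti₀ (Real.exp_pos L) hDL
    have hpre : 0 ≤ κ * 3 ^ d * Real.exp 14 * (R : ℝ) ^ (d - 1) * lam := by positivity
    exact mul_le_mul_of_nonneg_left hinv hpre
end

section
/- Interpolation energy estimate: let u, ū be functions on a discrete box Π₂ agreeing with given boundary conditions, d(x) = dist(x, Π₁)/R ∈ [0,1] the normalized distance to an inner box Π₁ ⊂ Π₂, and v = (1−d)ū + d·u. Then for neighbors x ∼ y, (v(x) − v(y))² ≤ (1−d(x))(ū(x)−ū(y))² + d(x)(u(x)−u(y))² + R^{−2} 1_{x,y∉Π₁}(ū(y)−u(y))² + 2R^{−1} 1_{x,y∉Π₁}|ū(y)−u(y)|[(1−d(x))|ū(x)−ū(y)| + d(x)|u(x)−u(y)|]. -/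
private lemma stmt16_aux (t δ A B C r : ℝ) (ht0 : 0 ≤ t) (ht1 : t ≤ 1)
    (hr : 0 ≤ r) (hδr : |δ| ≤ r) :
    ((1 - t) * A + t * B - δ * C) ^ 2 ≤
      (1 - t) * A ^ 2 + t * B ^ 2 + r ^ 2 * C ^ 2
        + 2 * r * |C| * ((1 - t) * |A| + t * |B|) := by
  have jensen : ((1 - t) * A + t * B) ^ 2 ≤ (1 - t) * A ^ 2 + t * B ^ 2 := by
    nlinarith [mul_nonneg (mul_nonneg ht0 (by linarith : (0:ℝ) ≤ 1 - t)) (sq_nonneg (A - B))]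
  have h2 : |(1 - t) * A + t * B| ≤ (1 - t) * |A| + t * |B| := by
    calc |(1 - t) * A + t * B| ≤ |(1 - t) * A| + |t * B| := abs_add_le _ _
      _ = (1 - t) * |A| + t * |B| := by
          rw [abs_mul, abs_mul, abs_of_nonneg (by linarith : (0:ℝ) ≤ 1 - t),
            abs_of_nonneg ht0]
  have h1 : |δ * C * ((1 - t) * A + t * B)| ≤ r * |C| * ((1 - t) * |A| + t * |B|) := by
    rw [abs_mul, abs_mul]
    exact mul_le_mul (mul_le_mul hδr le_rfl (abs_nonneg C) hr) h2
      (abs_nonneg _) (mul_nonneg hr (abs_nonneg C))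
  have cross : -(δ * C * ((1 - t) * A + t * B)) ≤ r * |C| * ((1 - t) * |A| + t * |B|) :=
    (neg_le_abs _).trans h1
  have sqb : (δ * C) ^ 2 ≤ r ^ 2 * C ^ 2 := by
    have hδ2 : δ ^ 2 ≤ r ^ 2 := by nlinarith [sq_abs δ, abs_nonneg δ]
    nlinarith [sq_nonneg C]
  nlinarith [jensen, cross, sqb]

/-- Pointwise interpolation inequality for `v = (1−d)ū + d·u`. -/
theorem stmt16 {V : Type*} (P1 : Set V) (R : ℝ) (hR : 0 < R)
    (dd : V → ℝ) (u ubar : V → ℝ) (x y : V)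
    (hd01 : ∀ z, 0 ≤ dd z ∧ dd z ≤ 1)
    (ind : ℝ)
    (hind0 : x ∈ P1 ∧ y ∈ P1 → ind = 0)
    (hind1 : ¬(x ∈ P1 ∧ y ∈ P1) → ind = 1)
    (hlip : |dd x - dd y| ≤ R⁻¹ * ind)
    (v : V → ℝ) (hv : ∀ z, v z = (1 - dd z) * ubar z + dd z * u z) :
    (v x - v y) ^ 2 ≤
      (1 - dd x) * (ubar x - ubar y) ^ 2 + dd x * (u x - u y) ^ 2
        + R⁻¹ ^ 2 * ind * (ubar y - u y) ^ 2
        + 2 * R⁻¹ * ind * |ubar y - u y| *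
            ((1 - dd x) * |ubar x - ubar y| + dd x * |u x - u y|) := by
  obtain ⟨ht0, ht1⟩ := hd01 x
  have hRinv : (0:ℝ) < R⁻¹ := inv_pos.mpr hR
  have hindval : ind = 0 ∨ ind = 1 := by
    by_cases h : x ∈ P1 ∧ y ∈ P1
    · exact Or.inl (hind0 h)
    · exact Or.inr (hind1 h)
  have hind2 : ind ^ 2 = ind := by rcases hindval with h | h <;> simp [h]
  have hindnn : 0 ≤ ind := by rcases hindval with h | h <;> simp [h]
  have key : v x - v y = (1 - dd x) * (ubar x - ubar y) + dd x * (u x - u y)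
      - (dd x - dd y) * (ubar y - u y) := by
    rw [hv x, hv y]; ring
  have haux := stmt16_aux (dd x) (dd x - dd y) (ubar x - ubar y) (u x - u y)
    (ubar y - u y) (R⁻¹ * ind) ht0 ht1 (mul_nonneg hRinv.le hindnn) hlip
  have hsq : (R⁻¹ * ind) ^ 2 = R⁻¹ ^ 2 * ind := by
    rw [mul_pow, hind2]
  rw [key]
  calc ((1 - dd x) * (ubar x - ubar y) + dd x * (u x - u y)
      - (dd x - dd y) * (ubar y - u y)) ^ 2
      ≤ (1 - dd x) * (ubar x - ubar y) ^ 2 + dd x * (u x - u y) ^ 2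
        + (R⁻¹ * ind) ^ 2 * (ubar y - u y) ^ 2
        + 2 * (R⁻¹ * ind) * |ubar y - u y| *
            ((1 - dd x) * |ubar x - ubar y| + dd x * |u x - u y|) := haux
    _ = (1 - dd x) * (ubar x - ubar y) ^ 2 + dd x * (u x - u y) ^ 2
        + R⁻¹ ^ 2 * ind * (ubar y - u y) ^ 2
        + 2 * R⁻¹ * ind * |ubar y - u y| *
            ((1 - dd x) * |ubar x - ubar y| + dd x * |u x - u y|) := by
        rw [hsq]; ring
end
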